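/- arXiv:1707.04380 — 6 statements merged into one kernel-verified Lean document; each statement's English description precedes it below -/
import Mathlib

section
/- (Basic risk bounds.) Let r > 0, v = r/(1+r), and let π = (1−η)δ₀ + ην be a sparse prior with η ∈ (0,1) and ν a probability measure on ℝ. Then for every θ ∈ ℝ, θ²/(2r) − E log N_{θ,v}(Z) ≤ ρ(θ, p̂_π) ≤ θ²/(2r) + E log D_θ(Z), where Z ~ N(0,1), N_{θ,v}(z) = 1 + (η/(1−η)) ∫ exp( μz/√v + μθ/v − μ²/(2v) ) ν(dμ), and D_θ(z) = N_{θ,1}(z). -/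
open MeasureTheory ProbabilityTheory Real Filter Set

noncomputable section

/-- Density of the `N(m, v)` distribution (variance `v`). -/
def gpdf (m v z : ℝ) : ℝ := gaussianPDFReal m v.toNNReal z

/-- The `N(m, v)` measure on `ℝ`. -/
def gmeas (m v : ℝ) : Measure ℝ := gaussianReal m v.toNNReal

/-- Density of `N_n(θ, v I)` on `ℝⁿ`. -/
def gpdfN (n : ℕ) (θ : Fin n → ℝ) (v : ℝ) (z : Fin n → ℝ) : ℝ :=
  ∏ i, gpdf (θ i) v (z i)

/-- The `N_n(θ, v I)` measure on `ℝⁿ`. -/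
def gmeasN (n : ℕ) (θ : Fin n → ℝ) (v : ℝ) : Measure (Fin n → ℝ) :=
  Measure.pi (fun i => gmeas (θ i) v)

/-- Kullback-Leibler risk of a predictive density estimate `phat` (where `phat x` is the
estimated density of the future observation given past data `x`) in the model
`X ~ N_n(θ, I)`, `Y ~ N_n(θ, r I)`. -/
def klRisk (n : ℕ) (r : ℝ) (θ : Fin n → ℝ) (phat : (Fin n → ℝ) → (Fin n → ℝ) → ℝ) : ℝ :=
  ∫ x, (∫ y, Real.log (gpdfN n θ r y / phat x y) ∂(gmeasN n θ r)) ∂(gmeasN n θ 1)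

/-- Univariate Kullback-Leibler predictive risk. -/
def klRisk1 (r θ : ℝ) (phat : ℝ → ℝ → ℝ) : ℝ :=
  ∫ x, (∫ y, Real.log (gpdf θ r y / phat x y) ∂(gmeas θ r)) ∂(gmeas θ 1)

/-- `phat x` is a probability density for every `x`: a predictive density estimate. -/
def IsPredEst (n : ℕ) (phat : (Fin n → ℝ) → (Fin n → ℝ) → ℝ) : Prop :=
  ∀ x, (∀ y, 0 ≤ phat x y) ∧ ∫ y, phat x y = 1

/-- `ℓ₀`-sparse parameter set. -/
def Theta (n s : ℕ) : Set (Fin n → ℝ) := {θ | {i | θ i ≠ 0}.ncard ≤ s}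

/-- Bounded sparse parameter set. -/
def ThetaB (n s : ℕ) (t : ℝ) : Set (Fin n → ℝ) :=
  {θ | {i | θ i ≠ 0}.ncard ≤ s ∧ ∀ i, |θ i| ≤ t}

/-- Minimax Kullback-Leibler risk over a parameter set. -/
def minimaxRisk (n : ℕ) (r : ℝ) (Θ : Set (Fin n → ℝ)) : ℝ :=
  ⨅ phat : {p : (Fin n → ℝ) → (Fin n → ℝ) → ℝ // IsPredEst n p}, ⨆ θ ∈ Θ, klRisk n r θ phat.1

/-- Univariate Bayes predictive density for a prior `pr` on `ℝ`. -/
def bayesPDE (r : ℝ) (pr : Measure ℝ) (x y : ℝ) : ℝ :=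
  (∫ μ, gpdf μ r y * gpdf μ 1 x ∂pr) / (∫ μ, gpdf μ 1 x ∂pr)

/-- The product (coordinatewise) Bayes predictive density estimate built from prior `pr`. -/
def bayesPDEprod (n : ℕ) (r : ℝ) (pr : Measure ℝ) :
    (Fin n → ℝ) → (Fin n → ℝ) → ℝ :=
  fun x y => ∏ i, bayesPDE r pr (x i) (y i)

/-- oracle variance `v = r/(1+r)`. -/
def vv (r : ℝ) : ℝ := r / (1 + r)

/-- `λ(η) = √(2 v log η⁻¹)`. -/
def lam (r η : ℝ) : ℝ := Real.sqrt (2 * vv r * Real.log η⁻¹)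

/-- The sparse prior `(1-η)δ₀ + ην`. -/
def sparsePrior (η : ℝ) (ν : Measure ℝ) : Measure ℝ :=
  ENNReal.ofReal (1 - η) • Measure.dirac 0 + ENNReal.ofReal η • ν

/-- `N_{θ,v}(z) = 1 + (η/(1-η)) ∫ exp(μz/√v + μθ/v - μ²/(2v)) ν(dμ)`. -/
def Nfun (η : ℝ) (ν : Measure ℝ) (θ v z : ℝ) : ℝ :=
  1 + η / (1 - η) * ∫ μ, Real.exp (μ * z / Real.sqrt v + μ * θ / v - μ ^ 2 / (2 * v)) ∂ν

/-- `E log N_{θ,v}(Z)` for `Z ~ N(0,1)`. -/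
def ElogN (η : ℝ) (ν : Measure ℝ) (θ v : ℝ) : ℝ :=
  ∫ z, Real.log (Nfun η ν θ v z) ∂(gmeas 0 1)

/-! Completing the square in the prior integrals gives, for the sparse prior,
`log (φ(y|θ,r) / p̂_π(y|x)) = θy/r - θ²/(2r) - log N_v(x + y/r) + log N_1(x)` with
`N_b(w) = 1 + η/(1-η) ∫ exp (tw - t²/(2b)) ν(dt) ≥ 1`. For `X ~ N(θ,1)` and independent
`Y ~ N(θ,r)` the statistic `X + Y/r` is `N(θ/v, 1/v)`, so the risk is exactly
`θ²/(2r) - E log N_{θ,v}(Z) + E log D_θ(Z)`, and both expectations are nonnegative. -/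

lemma gmeas_eq (m v : ℝ) : gmeas m v = gaussianReal m v.toNNReal := rfl

instance (m v : ℝ) : IsProbabilityMeasure (gmeas m v) := by
  rw [gmeas_eq]; infer_instance

lemma integral_id_gmeas (m v : ℝ) : ∫ z, z ∂gmeas m v = m := integral_id_gaussianReal

lemma integrable_id_gmeas (m v : ℝ) : Integrable (fun z => z) (gmeas m v) :=
  (memLp_id_gaussianReal 1).integrable le_rfl

lemma integrable_gmeas_of_abs_le_quadratic {m v : ℝ} {f : ℝ → ℝ}
    (hf : AEStronglyMeasurable f (gmeas m v)) {A B : ℝ} (hbound : ∀ w, |f w| ≤ A + B * w ^ 2) :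
    Integrable f (gmeas m v) :=
  ((integrable_const A).add (((memLp_id_gaussianReal 2).integrable_sq).const_mul B)).mono' hf
    (ae_of_all _ hbound)

lemma gmeas_map_affine (m a c : ℝ) {v : ℝ} (hv : 0 ≤ v) :
    (gmeas m v).map (fun z => a * z + c) = gmeas (a * m + c) (a ^ 2 * v) := by
  have hcomp : (fun z => a * z + c) = (· + c) ∘ (a * ·) := rfl
  rw [gmeas_eq, hcomp, ← Measure.map_map (by fun_prop) (by fun_prop),
    gaussianReal_map_const_mul, gaussianReal_map_add_const, gmeas_eq]
  congr 1
  ext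
  simp [hv, sq_nonneg, Real.toNNReal_mul (sq_nonneg a)]

lemma gmeas_prod_map_add {m₁ m₂ v₁ v₂ : ℝ} (hv₁ : 0 ≤ v₁) (hv₂ : 0 ≤ v₂) :
    ((gmeas m₁ v₁).prod (gmeas m₂ v₂)).map (fun p => p.1 + p.2) =
      gmeas (m₁ + m₂) (v₁ + v₂) := by
  rw [gmeas_eq, gmeas_eq, gmeas_eq, Real.toNNReal_add hv₁ hv₂, ← gaussianReal_conv_gaussianReal]
  rfl

lemma vv_pos {r : ℝ} (hr : 0 < r) : 0 < vv r := div_pos hr (by linarith)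

lemma gmeas_prod_map_add_div {θ r : ℝ} (hr : 0 < r) :
    ((gmeas θ 1).prod (gmeas θ r)).map (fun p => p.1 + p.2 / r) =
      gmeas (θ / vv r) (vv r)⁻¹ := by
  have hcomp : (fun p : ℝ × ℝ => p.1 + p.2 / r) =
      (fun p => p.1 + p.2) ∘ Prod.map id (fun y => r⁻¹ * y + 0) := by
    ext p; simp [div_eq_inv_mul]
  rw [hcomp, ← Measure.map_map (by fun_prop) (by fun_prop),
    ← Measure.map_prod_map _ _ measurable_id (by fun_prop), Measure.map_id,
    gmeas_map_affine _ _ _ hr.le, gmeas_prod_map_add zero_le_one (by positivity), vv]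
  congr 1 <;> field_simp <;> ring

lemma gpdf_pos {V : ℝ} (hV : 0 < V) (m y : ℝ) : 0 < gpdf m V y :=
  gaussianPDFReal_pos _ _ _ (by simpa using hV)

lemma gpdf_eq_mul_exp {V : ℝ} (hV : 0 < V) (m y : ℝ) :
    gpdf m V y = gpdf 0 V y * exp (m * y / V - m ^ 2 / (2 * V)) := by
  simp only [gpdf, gaussianPDFReal, Real.coe_toNNReal _ hV.le, mul_assoc, ← exp_add]
  congr 2
  field_simp
  ring

lemma gpdf_mul_gpdf_eq_mul_exp {r : ℝ} (hr : 0 < r) (m x y : ℝ) :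
    gpdf m r y * gpdf m 1 x =
      gpdf 0 r y * gpdf 0 1 x * exp (m * (x + y / r) - m ^ 2 / (2 * vv r)) := by
  have hexp : exp (m * y / r - m ^ 2 / (2 * r)) * exp (m * x / 1 - m ^ 2 / (2 * 1)) =
      exp (m * (x + y / r) - m ^ 2 / (2 * vv r)) := by
    rw [← exp_add, vv]; congr 1; field_simp; ring
  rw [gpdf_eq_mul_exp hr, gpdf_eq_mul_exp one_pos m x, ← hexp]
  ring

/-- For `b = 1` this is the Bayes marginal density of `x` under the sparse prior, divided by
`(1 - η) φ(x|0,1)`; see `integral_exp_tilt_sparsePrior`. -/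
def marginalRatio (η : ℝ) (ν : Measure ℝ) (b w : ℝ) : ℝ :=
  1 + η / (1 - η) * ∫ t, exp (t * w - t ^ 2 / (2 * b)) ∂ν

section

variable {η : ℝ} {ν : Measure ℝ}

lemma exp_tilt_le {b : ℝ} (hb : 0 < b) (t w : ℝ) :
    exp (t * w - t ^ 2 / (2 * b)) ≤ exp (b * w ^ 2 / 2) := by
  refine exp_le_exp.mpr ?_
  have hsq : b * w ^ 2 / 2 - (t * w - t ^ 2 / (2 * b)) = (b * w - t) ^ 2 / (2 * b) := by
    field_simp; ring
  linarith [div_nonneg (sq_nonneg (b * w - t)) (by positivity : (0 : ℝ) ≤ 2 * b)]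

lemma integrable_exp_tilt {b : ℝ} (hb : 0 < b) [IsFiniteMeasure ν] (w : ℝ) :
    Integrable (fun t => exp (t * w - t ^ 2 / (2 * b))) ν :=
  (integrable_const (exp (b * w ^ 2 / 2))).mono' (by fun_prop) <| ae_of_all _ fun t => by
    rw [norm_of_nonneg (exp_pos _).le]; exact exp_tilt_le hb t w

lemma one_le_marginalRatio (hη₀ : 0 ≤ η) (hη₁ : η ≤ 1) (b w : ℝ) :
    1 ≤ marginalRatio η ν b w :=
  le_add_of_nonneg_right <| mul_nonneg (div_nonneg hη₀ (sub_nonneg.mpr hη₁))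
    (integral_nonneg fun _ => (exp_pos _).le)

lemma marginalRatio_le (hη₀ : 0 ≤ η) (hη₁ : η < 1) {b : ℝ} (hb : 0 < b)
    [IsProbabilityMeasure ν] (w : ℝ) :
    marginalRatio η ν b w ≤ (1 - η)⁻¹ * exp (b * w ^ 2 / 2) := by
  have hint : ∫ t, exp (t * w - t ^ 2 / (2 * b)) ∂ν ≤ exp (b * w ^ 2 / 2) := by
    simpa using integral_mono_of_nonneg (μ := ν) (ae_of_all _ fun t => (exp_pos _).le)
      (integrable_const (exp (b * w ^ 2 / 2))) (ae_of_all _ fun t => exp_tilt_le hb t w)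
  have hexp : 1 ≤ exp (b * w ^ 2 / 2) := one_le_exp (by positivity)
  have hη₁' : 0 < 1 - η := by linarith
  have hc : 0 ≤ η / (1 - η) := div_nonneg hη₀ hη₁'.le
  calc marginalRatio η ν b w ≤ 1 + η / (1 - η) * exp (b * w ^ 2 / 2) := by
        unfold marginalRatio; gcongr
    _ ≤ (1 + η / (1 - η)) * exp (b * w ^ 2 / 2) := by nlinarith
    _ = (1 - η)⁻¹ * exp (b * w ^ 2 / 2) := by field_simp; ring

lemma measurable_marginalRatio [SFinite ν] (b : ℝ) : Measurable (marginalRatio η ν b) := by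
  have h : StronglyMeasurable fun q : ℝ × ℝ => exp (q.2 * q.1 - q.2 ^ 2 / (2 * b)) :=
    Continuous.stronglyMeasurable (by fun_prop)
  exact (h.integral_prod_right'.measurable.const_mul _).const_add _

lemma integrable_log_marginalRatio (hη₀ : 0 ≤ η) (hη₁ : η < 1) {b : ℝ} (hb : 0 < b)
    [IsProbabilityMeasure ν] (m v : ℝ) :
    Integrable (fun w => log (marginalRatio η ν b w)) (gmeas m v) := by
  refine integrable_gmeas_of_abs_le_quadratic (measurable_marginalRatio b).log.aestronglyMeasurable
    (A := log (1 - η)⁻¹) (B := b / 2) fun w => ?_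
  have h1 := one_le_marginalRatio (ν := ν) hη₀ hη₁.le b w
  rw [abs_of_nonneg (log_nonneg h1)]
  calc log (marginalRatio η ν b w) ≤ log ((1 - η)⁻¹ * exp (b * w ^ 2 / 2)) :=
        log_le_log (by linarith) (marginalRatio_le hη₀ hη₁ hb w)
    _ = log (1 - η)⁻¹ + b / 2 * w ^ 2 := by
        rw [log_mul (inv_ne_zero (by linarith)) (exp_pos _).ne', log_exp]; ring

lemma Nfun_eq_marginalRatio (θ b z : ℝ) :
    Nfun η ν θ b z = marginalRatio η ν b ((√b)⁻¹ * z + θ / b) := by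
  unfold Nfun marginalRatio
  congr 3 with t
  ring_nf

lemma ElogN_nonneg (hη₀ : 0 ≤ η) (hη₁ : η ≤ 1) (θ b : ℝ) : 0 ≤ ElogN η ν θ b := by
  refine integral_nonneg fun z => log_nonneg ?_
  rw [Nfun_eq_marginalRatio]
  exact one_le_marginalRatio hη₀ hη₁ _ _

lemma ElogN_eq_integral [SFinite ν] {b : ℝ} (hb : 0 < b) (θ : ℝ) :
    ElogN η ν θ b = ∫ w, log (marginalRatio η ν b w) ∂gmeas (θ / b) b⁻¹ := by
  have hmap : (gmeas 0 1).map (fun z => (√b)⁻¹ * z + θ / b) = gmeas (θ / b) b⁻¹ := by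
    rw [gmeas_map_affine _ _ _ zero_le_one, inv_pow, sq_sqrt hb.le, mul_zero, zero_add, mul_one]
  rw [← hmap, integral_map (by fun_prop) (measurable_marginalRatio b).log.aestronglyMeasurable]
  simp only [ElogN, Nfun_eq_marginalRatio]

lemma integral_sparsePrior (hη₀ : 0 ≤ η) (hη₁ : η ≤ 1) {f : ℝ → ℝ} (hf : Integrable f ν) :
    ∫ m, f m ∂sparsePrior η ν = (1 - η) * f 0 + η * ∫ m, f m ∂ν := by
  have hdirac : Integrable f (Measure.dirac 0) := integrable_dirac enorm_lt_top
  rw [sparsePrior, integral_add_measure (hdirac.smul_measure ENNReal.ofReal_ne_top)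
      (hf.smul_measure ENNReal.ofReal_ne_top), integral_smul_measure, integral_smul_measure,
    integral_dirac, ENNReal.toReal_ofReal (sub_nonneg.mpr hη₁), ENNReal.toReal_ofReal hη₀,
    smul_eq_mul, smul_eq_mul]

lemma integral_exp_tilt_sparsePrior (hη₀ : 0 ≤ η) (hη₁ : η < 1) {b : ℝ} (hb : 0 < b)
    [IsProbabilityMeasure ν] (w : ℝ) :
    ∫ m, exp (m * w - m ^ 2 / (2 * b)) ∂sparsePrior η ν = (1 - η) * marginalRatio η ν b w := by
  rw [integral_sparsePrior hη₀ hη₁.le (integrable_exp_tilt hb w), marginalRatio]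
  have hη₁' : 1 - η ≠ 0 := by linarith
  field_simp
  simp

lemma bayesPDE_sparsePrior {r : ℝ} (hr : 0 < r) (hη₀ : 0 ≤ η) (hη₁ : η < 1)
    [IsProbabilityMeasure ν] (x y : ℝ) :
    bayesPDE r (sparsePrior η ν) x y =
      gpdf 0 r y * (marginalRatio η ν (vv r) (x + y / r) / marginalRatio η ν 1 x) := by
  have hnum : ∫ m, gpdf m r y * gpdf m 1 x ∂sparsePrior η ν =
      gpdf 0 r y * gpdf 0 1 x * ((1 - η) * marginalRatio η ν (vv r) (x + y / r)) := by
    rw [integral_congr_ae (ae_of_all _ fun m => gpdf_mul_gpdf_eq_mul_exp hr m x y),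
      integral_const_mul, integral_exp_tilt_sparsePrior hη₀ hη₁ (vv_pos hr)]
  have hden : ∫ m, gpdf m 1 x ∂sparsePrior η ν =
      gpdf 0 1 x * ((1 - η) * marginalRatio η ν 1 x) := by
    rw [integral_congr_ae (ae_of_all _ fun m => gpdf_eq_mul_exp one_pos m x), integral_const_mul,
      ← integral_exp_tilt_sparsePrior hη₀ hη₁ one_pos x]
    simp
  have hφ := gpdf_pos one_pos 0 x
  have hN := one_le_marginalRatio (ν := ν) hη₀ hη₁.le 1 x
  have hη₁' : 1 - η ≠ 0 := by linarith
  rw [bayesPDE, hnum, hden]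
  field_simp

lemma log_gpdf_div_bayesPDE_sparsePrior {r : ℝ} (hr : 0 < r) (hη₀ : 0 ≤ η) (hη₁ : η < 1)
    [IsProbabilityMeasure ν] (θ x y : ℝ) :
    log (gpdf θ r y / bayesPDE r (sparsePrior η ν) x y) =
      θ / r * y - θ ^ 2 / (2 * r) - log (marginalRatio η ν (vv r) (x + y / r)) +
        log (marginalRatio η ν 1 x) := by
  have hNv := one_le_marginalRatio (ν := ν) hη₀ hη₁.le (vv r) (x + y / r)
  have hN1 := one_le_marginalRatio (ν := ν) hη₀ hη₁.le 1 x
  have hg := gpdf_pos hr 0 y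
  rw [bayesPDE_sparsePrior hr hη₀ hη₁, gpdf_eq_mul_exp hr, mul_div_mul_left _ _ hg.ne',
    log_div (exp_pos _).ne' (by positivity), log_exp, log_div (by positivity) (by positivity)]
  ring

lemma klRisk1_bayesPDE_sparsePrior {r : ℝ} (hr : 0 < r) (hη₀ : 0 ≤ η) (hη₁ : η < 1)
    [IsProbabilityMeasure ν] (θ : ℝ) :
    klRisk1 r θ (bayesPDE r (sparsePrior η ν)) =
      θ ^ 2 / (2 * r) - ElogN η ν θ (vv r) + ElogN η ν θ 1 := by
  set P := (gmeas θ 1).prod (gmeas θ r)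
  have hmap : P.map (fun p => p.1 + p.2 / r) = gmeas (θ / vv r) (vv r)⁻¹ :=
    gmeas_prod_map_add_div hr
  have hA : Integrable (fun p : ℝ × ℝ => θ / r * p.2 - θ ^ 2 / (2 * r)) P :=
    (((integrable_id_gmeas θ r).const_mul _).sub (integrable_const _)).comp_snd _
  have hB : Integrable (fun p : ℝ × ℝ => log (marginalRatio η ν (vv r) (p.1 + p.2 / r))) P := by
    have h := integrable_log_marginalRatio (ν := ν) hη₀ hη₁ (vv_pos hr) (θ / vv r) (vv r)⁻¹
    rw [← hmap] at h
    exact h.comp_measurable (by fun_prop)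
  have hC : Integrable (fun p : ℝ × ℝ => log (marginalRatio η ν 1 p.1)) P :=
    (integrable_log_marginalRatio hη₀ hη₁ one_pos θ 1).comp_fst _
  have hAB : Integrable (fun p : ℝ × ℝ => θ / r * p.2 - θ ^ 2 / (2 * r) -
      log (marginalRatio η ν (vv r) (p.1 + p.2 / r))) P := hA.sub hB
  have hIA : ∫ p, (θ / r * p.2 - θ ^ 2 / (2 * r)) ∂P = θ ^ 2 / (2 * r) := by
    rw [integral_fun_snd (fun y => θ / r * y - θ ^ 2 / (2 * r)),
      integral_sub ((integrable_id_gmeas θ r).const_mul _) (integrable_const _),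
      integral_const_mul, integral_id_gmeas]
    simp only [probReal_univ, integral_const, smul_eq_mul, one_mul]
    field_simp
    ring
  have hIB : ∫ p, log (marginalRatio η ν (vv r) (p.1 + p.2 / r)) ∂P = ElogN η ν θ (vv r) := by
    rw [ElogN_eq_integral (vv_pos hr), ← hmap,
      integral_map (by fun_prop) (measurable_marginalRatio _).log.aestronglyMeasurable]
  have hIC : ∫ p, log (marginalRatio η ν 1 p.1) ∂P = ElogN η ν θ 1 := by
    rw [integral_fun_fst (fun x => log (marginalRatio η ν 1 x)), ElogN_eq_integral one_pos]
    simp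
  simp only [klRisk1, log_gpdf_div_bayesPDE_sparsePrior hr hη₀ hη₁]
  rw [integral_integral (hAB.add hC), integral_add hAB hC, integral_sub hA hB, hIA, hIB, hIC]

end

/-- Basic risk bounds: for the sparse prior `π = (1-η)δ₀ + ην`,
`θ²/(2r) - E log N_{θ,v}(Z) ≤ ρ(θ, p̂_π) ≤ θ²/(2r) + E log D_θ(Z)`. -/
theorem basic_risk_bounds (r η : ℝ) (hr : 0 < r) (hη : η ∈ Set.Ioo (0 : ℝ) 1)
    (ν : Measure ℝ) [IsProbabilityMeasure ν] (θ : ℝ) :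
    θ ^ 2 / (2 * r) - ElogN η ν θ (vv r)
        ≤ klRisk1 r θ (bayesPDE r (sparsePrior η ν))
      ∧ klRisk1 r θ (bayesPDE r (sparsePrior η ν))
        ≤ θ ^ 2 / (2 * r) + ElogN η ν θ 1 := by
  rw [klRisk1_bayesPDE_sparsePrior hr hη.1.le hη.2]
  have hv := ElogN_nonneg (ν := ν) hη.1.le hη.2.le θ (vv r)
  have h1 := ElogN_nonneg (ν := ν) hη.1.le hη.2.le θ 1
  constructor <;> linarith
end
end

section
/- Let r > 0 and let π = (1−η)δ₀ + ην be a sparse prior with η ∈ (0,1) and ν a probability measure on ℝ. Then the Kullback–Leibler risk of the univariate Bayes predictive density at the origin satisfies ρ(0, p̂_π) ≤ log (1−η)⁻¹. (In particular ρ(0, p̂_π) = O(η) as η → 0.) -/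
open MeasureTheory ProbabilityTheory Real Filter Set

noncomputable section

/-!
The atom `(1-η)δ₀` of the prior bounds the numerator of `p̂_π(y|x)` below by
`(1-η) φ(y|0,r) φ(x|0,1)`, so `log (φ(y|0,r) / p̂_π(y|x)) ≤ log h(x)` with
`h(x) = m_π(x) / ((1-η) φ(x|0,1))`, where `m_π(x) = ∫ φ(x|μ,1) π(dμ)` is the marginal
density of `X`. By Jensen's inequality for the concave `log`,
`ρ(0, p̂_π) ≤ E₀ log h(X) ≤ log E₀ h(X) = log (∫ m_π / (1-η)) = log (1-η)⁻¹`.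
-/

lemma integral_le_log_integral {α : Type*} [MeasurableSpace α] {μ : Measure α}
    [IsProbabilityMeasure μ] {f g : α → ℝ} (hg : Integrable g μ) (hg_pos : ∀ x, 0 < g x)
    (hfg : ∀ x, f x ≤ log (g x)) (hg_one : 1 ≤ ∫ x, g x ∂μ) :
    ∫ x, f x ∂μ ≤ log (∫ x, g x ∂μ) := by
  set a := ∫ x, g x ∂μ
  have ha : 0 < a := by linarith
  by_cases hf : Integrable f μ
  swap
  · rw [integral_undef hf]
    exact log_nonneg hg_one
  -- `log` lies below its tangent line at `a`.
  have h_tangent : ∀ x, f x ≤ log a - 1 + g x / a := fun x => by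
    have h := log_le_sub_one_of_pos (div_pos (hg_pos x) ha)
    rw [log_div (hg_pos x).ne' ha.ne'] at h
    linarith [hfg x]
  calc ∫ x, f x ∂μ ≤ ∫ x, log a - 1 + g x / a ∂μ :=
        integral_mono hf ((integrable_const _).add (hg.div_const a)) h_tangent
    _ = log a := by
        rw [integral_add (integrable_const _) (hg.div_const a), integral_const, integral_div,
          div_self ha.ne']
        simp

lemma mul_le_integral_of_smul_dirac_le {α : Type*} [MeasurableSpace α]
    [MeasurableSingletonClass α] {pr : Measure α} {c : ℝ} {a : α} (hc : 0 ≤ c)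
    (hpr : ENNReal.ofReal c • Measure.dirac a ≤ pr) {f : α → ℝ} (hf : Integrable f pr)
    (hf_nonneg : 0 ≤ f) : c * f a ≤ ∫ x, f x ∂pr :=
  calc c * f a = ∫ x, f x ∂(ENNReal.ofReal c • Measure.dirac a) := by
        rw [integral_smul_measure, integral_dirac, ENNReal.toReal_ofReal hc, smul_eq_mul]
    _ ≤ ∫ x, f x ∂pr := integral_mono_measure hpr (ae_of_all _ hf_nonneg) hf

lemma gpdf_nonneg (m v z : ℝ) : 0 ≤ gpdf m v z := gaussianPDFReal_nonneg _ _ _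

lemma gpdf_pos_s10 {v : ℝ} (hv : 0 < v) (m z : ℝ) : 0 < gpdf m v z :=
  gaussianPDFReal_pos m v.toNNReal z (Real.toNNReal_pos.mpr hv).ne'

lemma gpdf_le (m v z : ℝ) : gpdf m v z ≤ (√(2 * π * v.toNNReal))⁻¹ := by
  unfold gpdf gaussianPDFReal
  refine mul_le_of_le_one_right (by positivity) (exp_le_one_iff.mpr ?_)
  exact div_nonpos_of_nonpos_of_nonneg (by simp [sq_nonneg]) (by positivity)

lemma continuous_gpdf (v : ℝ) : Continuous fun p : ℝ × ℝ => gpdf p.1 v p.2 := by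
  unfold gpdf gaussianPDFReal
  fun_prop

lemma continuous_gpdf_left (v z : ℝ) : Continuous fun m => gpdf m v z :=
  (continuous_gpdf v).comp (continuous_id.prodMk continuous_const)

lemma norm_gpdf_le (m v z : ℝ) : ‖gpdf m v z‖ ≤ (√(2 * π * v.toNNReal))⁻¹ :=
  (Real.norm_of_nonneg (gpdf_nonneg m v z)).trans_le (gpdf_le m v z)

section Prior

variable {pr : Measure ℝ} [IsFiniteMeasure pr]

lemma integrable_gpdf_left (v z : ℝ) : Integrable (fun m => gpdf m v z) pr :=
  .of_bound (continuous_gpdf_left v z).aestronglyMeasurable _ (ae_of_all _ (norm_gpdf_le · v z))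

lemma integrable_gpdf_mul_gpdf_left (v w y z : ℝ) :
    Integrable (fun m => gpdf m v y * gpdf m w z) pr :=
  (integrable_gpdf_left w z).bdd_mul (continuous_gpdf_left v y).aestronglyMeasurable
    (ae_of_all _ (norm_gpdf_le · v y))

end Prior

lemma integrable_gmeas_iff {m v : ℝ} (hv : 0 < v) {g : ℝ → ℝ} :
    Integrable g (gmeas m v) ↔ Integrable (fun x => gpdf m v x * g x) := by
  rw [gmeas, gaussianReal_of_var_ne_zero _ (Real.toNNReal_pos.mpr hv).ne',
    integrable_withDensity_iff_integrable_smul' (measurable_gaussianPDF _ _)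
      (ae_of_all _ fun _ => gaussianPDF_lt_top)]
  simp [toReal_gaussianPDF, gpdf]

lemma integral_gmeas {m v : ℝ} (hv : 0 < v) (g : ℝ → ℝ) :
    ∫ x, g x ∂(gmeas m v) = ∫ x, gpdf m v x * g x :=
  integral_gaussianReal_eq_integral_smul (Real.toNNReal_pos.mpr hv).ne'

instance inst_s10 (m v : ℝ) : IsProbabilityMeasure (gmeas m v) := by
  unfold gmeas
  infer_instance

def marginalPDF (pr : Measure ℝ) (x : ℝ) : ℝ := ∫ m, gpdf m 1 x ∂pr

section Marginal

variable {pr : Measure ℝ} {c : ℝ}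

lemma gpdf_mul_marginalPDF_div (x : ℝ) :
    gpdf 0 1 x * (marginalPDF pr x / (c * gpdf 0 1 x)) = marginalPDF pr x / c := by
  have := (gpdf_pos_s10 one_pos 0 x).ne'
  field_simp

variable [IsFiniteMeasure pr]

lemma integrable_gpdf_prod :
    Integrable (fun p : ℝ × ℝ => gpdf p.1 1 p.2) (pr.prod volume) := by
  rw [integrable_prod_iff (continuous_gpdf 1).aestronglyMeasurable]
  refine ⟨ae_of_all _ fun m => integrable_gaussianPDFReal m _, ?_⟩
  have h_norm : ∀ m : ℝ, ∫ x, ‖gpdf m 1 x‖ = 1 := fun m => by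
    simp_rw [Real.norm_of_nonneg (gpdf_nonneg _ _ _)]
    exact integral_gaussianPDFReal_eq_one m (by simp)
  simp only [h_norm]
  exact integrable_const 1

lemma integrable_marginalPDF : Integrable (marginalPDF pr) :=
  integrable_gpdf_prod.integral_prod_right

lemma integral_marginalPDF : ∫ x, marginalPDF pr x = pr.real univ := by
  unfold marginalPDF
  rw [← integral_integral_swap (f := fun m x => gpdf m 1 x) integrable_gpdf_prod]
  simp [gpdf, integral_gaussianPDFReal_eq_one]

lemma integrable_marginalPDF_div :
    Integrable (fun x => marginalPDF pr x / (c * gpdf 0 1 x)) (gmeas 0 1) := by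
  rw [integrable_gmeas_iff one_pos]
  simpa only [gpdf_mul_marginalPDF_div] using integrable_marginalPDF.div_const c

lemma integral_marginalPDF_div :
    ∫ x, marginalPDF pr x / (c * gpdf 0 1 x) ∂(gmeas 0 1) = pr.real univ / c := by
  rw [integral_gmeas one_pos]
  simp only [gpdf_mul_marginalPDF_div]
  rw [integral_div, integral_marginalPDF]

variable (hc : 0 < c) (hpr : ENNReal.ofReal c • Measure.dirac 0 ≤ pr)
include hc hpr

lemma mul_gpdf_le_marginalPDF (x : ℝ) : c * gpdf 0 1 x ≤ marginalPDF pr x :=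
  mul_le_integral_of_smul_dirac_le hc.le hpr (integrable_gpdf_left 1 x) (gpdf_nonneg · 1 x)

lemma one_le_marginalPDF_div (x : ℝ) : 1 ≤ marginalPDF pr x / (c * gpdf 0 1 x) :=
  (one_le_div (mul_pos hc (gpdf_pos_s10 one_pos 0 x))).2 (mul_gpdf_le_marginalPDF hc hpr x)

lemma log_div_bayesPDE_le (r x y : ℝ) :
    log (gpdf 0 r y / bayesPDE r pr x y) ≤ log (marginalPDF pr x / (c * gpdf 0 1 x)) := by
  rcases (gpdf_nonneg 0 r y).eq_or_lt with h_zero | h_pos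
  -- `gpdf 0 r y = 0` happens only for `r ≤ 0`, where `log 0 = 0`.
  · rw [← h_zero, zero_div, log_zero]
    exact log_nonneg (one_le_marginalPDF_div hc hpr x)
  have hφ := gpdf_pos_s10 one_pos 0 x
  have h_num : c * (gpdf 0 r y * gpdf 0 1 x) ≤ ∫ m, gpdf m r y * gpdf m 1 x ∂pr :=
    mul_le_integral_of_smul_dirac_le hc.le hpr (integrable_gpdf_mul_gpdf_left r 1 y x)
      fun m => mul_nonneg (gpdf_nonneg m r y) (gpdf_nonneg m 1 x)
  have h_marg : 0 < marginalPDF pr x :=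
    (mul_pos hc hφ).trans_le (mul_gpdf_le_marginalPDF hc hpr x)
  have h_bayes : gpdf 0 r y / bayesPDE r pr x y
      = gpdf 0 r y * marginalPDF pr x / ∫ m, gpdf m r y * gpdf m 1 x ∂pr := by
    rw [bayesPDE, div_div_eq_mul_div, marginalPDF]
  rw [h_bayes]
  have h_num_pos : 0 < ∫ m, gpdf m r y * gpdf m 1 x ∂pr := by
    refine lt_of_lt_of_le ?_ h_num
    positivity
  refine log_le_log (by positivity) ?_
  calc gpdf 0 r y * marginalPDF pr x / ∫ m, gpdf m r y * gpdf m 1 x ∂pr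
      ≤ gpdf 0 r y * marginalPDF pr x / (c * (gpdf 0 r y * gpdf 0 1 x)) :=
        div_le_div_of_nonneg_left (by positivity) (by positivity) h_num
    _ = marginalPDF pr x / (c * gpdf 0 1 x) := by field_simp

end Marginal

theorem klRisk1_zero_bayesPDE_le {pr : Measure ℝ} [IsFiniteMeasure pr] {c : ℝ} (hc : 0 < c)
    (hpr : ENNReal.ofReal c • Measure.dirac 0 ≤ pr) (r : ℝ) :
    klRisk1 r 0 (bayesPDE r pr) ≤ log (pr.real univ / c) := by
  have h_ratio_one := one_le_marginalPDF_div hc hpr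
  have h_ratio_pos x := one_pos.trans_le (h_ratio_one x)
  have h_inner x : ∫ y, log (gpdf 0 r y / bayesPDE r pr x y) ∂(gmeas 0 r)
      ≤ log (marginalPDF pr x / (c * gpdf 0 1 x)) := by
    simpa using integral_le_log_integral (μ := gmeas 0 r) (integrable_const _)
      (fun _ => h_ratio_pos x) (log_div_bayesPDE_le hc hpr r x) (by simpa using h_ratio_one x)
  have h_mass : 1 ≤ ∫ x, marginalPDF pr x / (c * gpdf 0 1 x) ∂(gmeas 0 1) := by
    simpa using integral_mono (integrable_const 1) integrable_marginalPDF_div h_ratio_one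
  rw [klRisk1, ← integral_marginalPDF_div]
  exact integral_le_log_integral integrable_marginalPDF_div h_ratio_pos h_inner h_mass

theorem risk_at_zero_bound_general (r η : ℝ) (hη : η ∈ Set.Ioo (0 : ℝ) 1)
    (ν : Measure ℝ) [IsProbabilityMeasure ν] :
    klRisk1 r 0 (bayesPDE r (sparsePrior η ν)) ≤ Real.log (1 - η)⁻¹ := by
  obtain ⟨hη0, hη1⟩ := hη
  have : IsFiniteMeasure (sparsePrior η ν) := ⟨by simp [sparsePrior, ENNReal.add_lt_top]⟩
  have h_mass : (sparsePrior η ν).real univ = 1 := by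
    simp [sparsePrior, measureReal_def, ENNReal.toReal_add, hη0.le, hη1.le]
  have h_dirac : ENNReal.ofReal (1 - η) • Measure.dirac 0 ≤ sparsePrior η ν :=
    Measure.le_add_right le_rfl
  simpa [h_mass] using klRisk1_zero_bayesPDE_le (sub_pos.2 hη1) h_dirac r

/-- Risk at the origin: for the sparse prior `π = (1-η)δ₀ + ην`,
`ρ(0, p̂_π) ≤ log (1-η)⁻¹`. -/
theorem risk_at_zero_bound (r η : ℝ) (hr : 0 < r) (hη : η ∈ Set.Ioo (0 : ℝ) 1)
    (ν : Measure ℝ) [IsProbabilityMeasure ν] :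
    klRisk1 r 0 (bayesPDE r (sparsePrior η ν)) ≤ Real.log (1 - η)⁻¹ :=
  risk_at_zero_bound_general r η hη ν

end
end

section
/- If a₁, a₂, … are positive real numbers, then for each n ≥ 1, log( 1 + Σ_{k=1}^{n+1} a_k ) < log(1 + a₁) + Σ_{k=1}^{n} a_{k+1}/a_k. -/
open Finset Real

lemma log_add_lt_log_add_div {x y : ℝ} (hx : 0 < x) (hy : 0 < y) :
    log (x + y) < log x + y / x := by
  have h := log_lt_sub_one_of_pos (by positivity : 0 < (x + y) / x)
    (by rw [ne_eq, div_eq_one_iff_eq hx.ne']; linarith)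
  rw [log_div (by positivity) hx.ne', add_div, div_self hx.ne'] at h
  linarith

-- `a n` is one of the summands, so dividing by `1 + ∑ a` beats dividing by `a n`.
lemma log_one_add_sum_Icc_succ_lt {a : ℕ → ℝ} (ha : ∀ k, 1 ≤ k → 0 < a k) {n : ℕ}
    (hn : 1 ≤ n) :
    log (1 + ∑ k ∈ Icc 1 (n + 1), a k) < log (1 + ∑ k ∈ Icc 1 n, a k) + a (n + 1) / a n := by
  set S := ∑ k ∈ Icc 1 n, a k
  have han : a n ≤ S := single_le_sum (fun k hk => (ha k (mem_Icc.mp hk).1).le) (by simp [hn])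
  have han_pos := ha n hn
  have hy := ha (n + 1) (by omega)
  rw [sum_Icc_succ_top (by omega), ← add_assoc]
  calc log (1 + S + a (n + 1)) < log (1 + S) + a (n + 1) / (1 + S) :=
        log_add_lt_log_add_div (by linarith) hy
    _ ≤ log (1 + S) + a (n + 1) / a n := by gcongr; linarith

/-- Lemma A.1: if `a₁, a₂, …` are positive then for each `n ≥ 1`,
`log(1 + Σ_{k=1}^{n+1} a_k) < log(1+a₁) + Σ_{k=1}^n a_{k+1}/a_k`. -/
theorem log_one_add_sum_lt (a : ℕ → ℝ) (ha : ∀ k, 1 ≤ k → 0 < a k)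
    (n : ℕ) (hn : 1 ≤ n) :
    Real.log (1 + ∑ k ∈ Finset.Icc 1 (n + 1), a k)
      < Real.log (1 + a 1) + ∑ k ∈ Finset.Icc 1 n, a (k + 1) / a k := by
  induction n, hn using Nat.le_induction with
  | base => simpa using log_one_add_sum_Icc_succ_lt ha le_rfl
  | succ m _ ih =>
    rw [sum_Icc_succ_top (by omega : 1 ≤ m + 1) (fun k => a (k + 1) / a k)]
    linarith [log_one_add_sum_Icc_succ_lt ha (by omega : 1 ≤ m + 1)]
end

section
/- Let r > 0, v = r/(1+r), η ∈ (0, 1/2], l > 0 and θ ∈ ℝ with θ l / v ≥ 1. Let Z ~ N(0,1) and define N^S_{θ,v}(z) = 1 + (η/(1−η)) · (1/(2l)) ∫_{−l}^{l} exp( μz/√v + μθ/v − μ²/(2v) ) dμ, the numerator functional associated with the spike-and-slab prior π_S[η,l]. Then E log N^S_{θ,v}(Z) ≤ θ l / v. -/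
/-!
By Jensen, `E log N ≤ log E N`. The Gaussian moment generating function gives
`E exp (μ Z / √v) = exp (μ² / (2v))`, which cancels the quadratic term of the integrand, so by
Fubini `E N = 1 + (η / (1 - η)) sinh a / a` with `a = θ l / v`. For `η ≤ 1/2` and `a ≥ 1` this is
at most `1 + sinh a ≤ cosh a + sinh a = exp a`.
-/

open MeasureTheory ProbabilityTheory Real Filter Set

noncomputable section

/-- Numerator functional of the spike-and-slab prior `π_S[η,l]`:
`N^S_{θ,v}(z) = 1 + (η/(1-η))(1/(2l)) ∫_{-l}^{l} exp(μz/√v + μθ/v - μ²/(2v)) dμ`. -/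
def NS (η l θ v z : ℝ) : ℝ :=
  1 + η / (1 - η) *
    ((2 * l)⁻¹ * ∫ μ in (-l)..l, Real.exp (μ * z / Real.sqrt v + μ * θ / v - μ ^ 2 / (2 * v)))


def slabIntegrand (v θ z μ : ℝ) : ℝ :=
  exp (μ * z / √v + μ * θ / v - μ ^ 2 / (2 * v))

lemma NS_eq_slabIntegrand (η l θ v z : ℝ) :
    NS η l θ v z = 1 + η / (1 - η) * ((2 * l)⁻¹ * ∫ μ in (-l)..l, slabIntegrand v θ z μ) :=
  rfl

lemma slabIntegrand_pos (v θ z μ : ℝ) : 0 < slabIntegrand v θ z μ :=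
  exp_pos _

lemma continuous_uncurry_slabIntegrand (v θ : ℝ) :
    Continuous (Function.uncurry (slabIntegrand v θ)) := by
  unfold slabIntegrand Function.uncurry
  fun_prop

lemma integral_exp_mul_gaussianReal (m : ℝ) (w : NNReal) (t : ℝ) :
    ∫ z, exp (t * z) ∂gaussianReal m w = exp (m * t + w * t ^ 2 / 2) :=
  congrFun mgf_id_gaussianReal t

lemma slabIntegrand_eq_mul_exp {v : ℝ} (hv : 0 < v) (θ z μ : ℝ) :
    slabIntegrand v θ z μ = exp (μ * θ / v - (μ / √v) ^ 2 / 2) * exp (μ / √v * z) := by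
  rw [slabIntegrand, ← exp_add, div_pow, sq_sqrt hv.le]
  ring_nf

lemma integrable_slabIntegrand_gaussianReal {v : ℝ} (hv : 0 < v) (θ μ : ℝ) :
    Integrable (fun z ↦ slabIntegrand v θ z μ) (gaussianReal 0 1) := by
  simp_rw [slabIntegrand_eq_mul_exp hv]
  exact (integrable_exp_mul_gaussianReal _).const_mul _

lemma integral_slabIntegrand_gaussianReal {v : ℝ} (hv : 0 < v) (θ μ : ℝ) :
    ∫ z, slabIntegrand v θ z μ ∂gaussianReal 0 1 = exp (μ * θ / v) := by
  simp_rw [slabIntegrand_eq_mul_exp hv]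
  rw [integral_const_mul, integral_exp_mul_gaussianReal, ← exp_add]
  norm_num

lemma integrable_uncurry_slabIntegrand {v : ℝ} (hv : 0 < v) (θ a b : ℝ) :
    Integrable (Function.uncurry (slabIntegrand v θ))
      ((gaussianReal 0 1).prod (volume.restrict (Ioc a b))) := by
  have hF := continuous_uncurry_slabIntegrand v θ
  refine (integrable_prod_iff' hF.aestronglyMeasurable).2
    ⟨ae_of_all _ (integrable_slabIntegrand_gaussianReal hv θ), ?_⟩
  simp_rw [Function.uncurry_apply_pair, norm_of_nonneg (slabIntegrand_pos _ _ _ _).le,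
    integral_slabIntegrand_gaussianReal hv]
  exact Continuous.integrableOn_Ioc (by fun_prop)

lemma integrable_intervalIntegral_slabIntegrand {v : ℝ} (hv : 0 < v) (θ : ℝ) {a b : ℝ}
    (hab : a ≤ b) :
    Integrable (fun z ↦ ∫ μ in a..b, slabIntegrand v θ z μ) (gaussianReal 0 1) := by
  simp_rw [intervalIntegral.integral_of_le hab]
  exact (integrable_uncurry_slabIntegrand hv θ a b).integral_prod_left

lemma integral_intervalIntegral_slabIntegrand {v : ℝ} (hv : 0 < v) (θ : ℝ) {a b : ℝ}
    (hab : a ≤ b) :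
    ∫ z, (∫ μ in a..b, slabIntegrand v θ z μ) ∂gaussianReal 0 1 =
      ∫ μ in a..b, exp (μ * θ / v) := by
  simp_rw [intervalIntegral.integral_of_le hab]
  rw [integral_integral_swap (integrable_uncurry_slabIntegrand hv θ a b)]
  simp_rw [integral_slabIntegrand_gaussianReal hv]

lemma integral_exp_mul_symm_interval {b : ℝ} (hb : b ≠ 0) (l : ℝ) :
    ∫ μ in (-l)..l, exp (μ * b) = 2 * sinh (l * b) / b := by
  rw [intervalIntegral.integral_comp_mul_right exp hb, integral_exp, sinh_eq, smul_eq_mul,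
    neg_mul]
  field_simp

lemma one_le_NS {η : ℝ} (hη0 : 0 ≤ η) (hη1 : η < 1) {l : ℝ} (hl : 0 ≤ l) (θ v z : ℝ) :
    1 ≤ NS η l θ v z := by
  rw [NS_eq_slabIntegrand, le_add_iff_nonneg_right]
  have hη : 0 ≤ η / (1 - η) := div_nonneg hη0 (by linarith)
  have hI : 0 ≤ ∫ μ in (-l)..l, slabIntegrand v θ z μ :=
    intervalIntegral.integral_nonneg (by linarith) fun μ _ ↦ (slabIntegrand_pos v θ z μ).le
  positivity

lemma integrable_NS {v : ℝ} (hv : 0 < v) (η θ : ℝ) {l : ℝ} (hl : 0 ≤ l) :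
    Integrable (NS η l θ v) (gaussianReal 0 1) := by
  simp_rw [funext (NS_eq_slabIntegrand η l θ v)]
  exact (integrable_const 1).add
    (((integrable_intervalIntegral_slabIntegrand hv θ (by linarith)).const_mul _).const_mul _)

lemma integral_NS {v : ℝ} (hv : 0 < v) (η : ℝ) {θ l : ℝ} (hθ : θ ≠ 0) (hl : 0 < l) :
    ∫ z, NS η l θ v z ∂gaussianReal 0 1 = 1 + η / (1 - η) * (sinh (θ * l / v) / (θ * l / v)) := by
  simp_rw [NS_eq_slabIntegrand]
  rw [integral_add (integrable_const 1)
      (((integrable_intervalIntegral_slabIntegrand hv θ (by linarith)).const_mul _).const_mul _),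
    integral_const, probReal_univ, one_smul, integral_const_mul, integral_const_mul,
    integral_intervalIntegral_slabIntegrand hv θ (by linarith)]
  simp_rw [mul_div_assoc]
  rw [integral_exp_mul_symm_interval (div_ne_zero hθ hv.ne')]
  field_simp

lemma integral_log_le_log_integral {α : Type*} [MeasurableSpace α] {μ : Measure α}
    [IsProbabilityMeasure μ] {f : α → ℝ} (hf : ∀ᵐ x ∂μ, 1 ≤ f x) (hfi : Integrable f μ) :
    ∫ x, log (f x) ∂μ ≤ log (∫ x, f x ∂μ) := by
  have hlog : Integrable (fun x ↦ log (f x)) μ := by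
    refine hfi.mono' (measurable_log.comp_aemeasurable hfi.aemeasurable).aestronglyMeasurable ?_
    filter_upwards [hf] with x hx
    rw [norm_of_nonneg (log_nonneg hx)]
    linarith [log_le_sub_one_of_pos (by linarith : 0 < f x)]
  have hpos : Ici (1 : ℝ) ⊆ Ioi 0 := Ici_subset_Ioi.2 one_pos
  exact (strictConcaveOn_log_Ioi.concaveOn.subset hpos (convex_Ici 1)).le_map_integral
    (continuousOn_log.mono fun x hx ↦ (hpos hx).ne') isClosed_Ici hf hfi hlog

lemma one_add_mul_sinh_div_le_exp {c a : ℝ} (hc1 : c ≤ 1) (ha : 1 ≤ a) :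
    1 + c * (sinh a / a) ≤ exp a := by
  have hsinh : 0 ≤ sinh a := sinh_nonneg_iff.2 (by linarith)
  have h1 : sinh a / a ≤ sinh a := div_le_self hsinh ha
  have h2 : c * (sinh a / a) ≤ sinh a :=
    (mul_le_of_le_one_left (div_nonneg hsinh (by linarith)) hc1).trans h1
  linarith [one_le_cosh a, cosh_add_sinh a]

/-- Lemma 3.1: if `η ≤ 1/2` and `θl/v ≥ 1` then `E log N^S_{θ,v}(Z) ≤ θl/v`. -/
theorem spike_slab_N_expectation_bound (r η l θ : ℝ) (hr : 0 < r)
    (hη0 : 0 < η) (hη : η ≤ 1 / 2) (hl : 0 < l) (hθ : 1 ≤ θ * l / vv r) :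
    ∫ z, Real.log (NS η l θ (vv r) z) ∂(gmeas 0 1) ≤ θ * l / vv r := by
  have hv : 0 < vv r := div_pos hr (by linarith)
  have hθ0 : θ ≠ 0 := by
    rintro rfl
    norm_num at hθ
  have hN1 : ∀ z, 1 ≤ NS η l θ (vv r) z := one_le_NS hη0.le (by linarith) hl.le θ _
  have hNi := integrable_NS hv η θ hl.le
  have hE1 : 1 ≤ ∫ z, NS η l θ (vv r) z ∂gaussianReal 0 1 := by
    simpa using integral_mono (integrable_const 1) hNi hN1
  rw [gmeas, Real.toNNReal_one]
  calc ∫ z, log (NS η l θ (vv r) z) ∂gaussianReal 0 1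
      ≤ log (∫ z, NS η l θ (vv r) z ∂gaussianReal 0 1) :=
        integral_log_le_log_integral (ae_of_all _ hN1) hNi
    _ ≤ θ * l / vv r := by
        rw [log_le_iff_le_exp (by linarith), integral_NS hv η hθ0 hl]
        exact one_add_mul_sinh_div_le_exp ((div_le_one (by linarith)).2 (by linarith)) hθ

end
end

section
/- Let Φ denote the standard normal CDF and φ the standard normal density, and let Z ~ N(0,1). For v ∈ (0,1], l ≥ 1 and |θ| ≤ l, define Φ_{l,v} = Φ( v^{−1/2}(l−θ) − Z ) − Φ( v^{−1/2}(−l−θ) − Z ). Then, uniformly in such v, l, θ, E log Φ_{l,v} ≥ log φ(0) − 2/3 = −(1/2) log(2π) − 2/3. -/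
open MeasureTheory ProbabilityTheory Real Filter Set

noncomputable section

/-- Standard normal CDF `Φ`. -/
def stdCDF (z : ℝ) : ℝ := (gaussianReal 0 1 (Set.Iic z)).toReal

/-! Write `A = (l - θ)/√v` and `B = (-l - θ)/√v`. Since `|θ| ≤ l`, `1 ≤ l` and `v ≤ 1`, we have
`B ≤ 0 ≤ A` and `A - B ≥ 2`, so `[B, A]` contains a unit window `[c, c + 1]` with `-1 ≤ c ≤ 0`.
Then `Φ_{l,v} ≥ ∫_{c-Z}^{c+1-Z} φ`, and Jensen's inequality on this unit window gives
`log Φ_{l,v} ≥ ∫_{c-Z}^{c+1-Z} log φ = log φ(0) - ((c - Z)² + (c - Z) + 1/3)/2`,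
whose expectation is `log φ(0) - (c² + c)/2 - 2/3 ≥ log φ(0) - 2/3`. -/

open scoped NNReal

lemma continuous_gaussianPDFReal (μ : ℝ) (v : ℝ≥0) : Continuous (gaussianPDFReal μ v) := by
  rw [gaussianPDFReal_def]
  fun_prop

lemma stdCDF_eq_cdf : stdCDF = cdf (gaussianReal 0 1) := by
  ext x
  rw [stdCDF, cdf_eq_real, measureReal_def]

lemma stdCDF_sub_stdCDF {a b : ℝ} (hab : a ≤ b) :
    stdCDF b - stdCDF a = ∫ x in a..b, gaussianPDFReal 0 1 x := by
  have hmono : stdCDF a ≤ stdCDF b := stdCDF_eq_cdf ▸ (cdf (gaussianReal 0 1)).mono hab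
  have hIoc := (cdf (gaussianReal 0 1)).measure_Ioc a b
  rw [measure_cdf, gaussianReal_apply_eq_integral 0 one_ne_zero, ← stdCDF_eq_cdf,
    ← intervalIntegral.integral_of_le hab] at hIoc
  rw [← ENNReal.toReal_ofReal (sub_nonneg.2 hmono), ← hIoc,
    ENNReal.toReal_ofReal (intervalIntegral.integral_nonneg hab fun x _ =>
      gaussianPDFReal_nonneg 0 1 x)]

lemma stdCDF_strictMono : StrictMono stdCDF := fun _ _ hab =>
  sub_pos.1 <| stdCDF_sub_stdCDF hab.le ▸ intervalIntegral.intervalIntegral_pos_of_pos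
    (integrable_gaussianPDFReal 0 1).intervalIntegrable
    (fun x => gaussianPDFReal_pos 0 1 x one_ne_zero) hab

lemma stdCDF_nonneg (x : ℝ) : 0 ≤ stdCDF x := stdCDF_eq_cdf ▸ cdf_nonneg _ x

lemma stdCDF_le_one (x : ℝ) : stdCDF x ≤ 1 := stdCDF_eq_cdf ▸ cdf_le_one _ x

lemma log_gaussianPDFReal_zero_one (x : ℝ) :
    log (gaussianPDFReal 0 1 x) = -(1 / 2) * log (2 * π) - x ^ 2 / 2 := by
  rw [gaussianPDFReal, log_mul (by positivity) (exp_ne_zero _), log_inv, NNReal.coe_one,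
    mul_one, log_sqrt (by positivity), log_exp]
  ring

lemma integral_log_gaussianPDFReal_zero_one (u : ℝ) :
    ∫ x in u..u + 1, log (gaussianPDFReal 0 1 x) =
      -(1 / 2) * log (2 * π) - (u ^ 2 + u + 1 / 3) / 2 := by
  simp_rw [log_gaussianPDFReal_zero_one]
  rw [intervalIntegral.integral_sub intervalIntegrable_const
      (((continuous_pow 2).div_const 2).intervalIntegrable _ _),
    intervalIntegral.integral_const, intervalIntegral.integral_div, integral_pow]
  simp only [smul_eq_mul]
  ring

lemma intervalIntegral_log_le_log_intervalIntegral {f : ℝ → ℝ} (hf : Continuous f)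
    (hpos : ∀ x, 0 < f x) (u : ℝ) :
    ∫ x in u..u + 1, log (f x) ≤ log (∫ x in u..u + 1, f x) := by
  have : IsProbabilityMeasure (volume.restrict (Ioc u (u + 1))) :=
    ⟨by simp [Real.volume_Ioc]⟩
  have hlogf : Continuous fun x => log (f x) := hf.log fun x => (hpos x).ne'
  have hjensen := convexOn_exp.map_integral_le continuous_exp.continuousOn isClosed_univ
    (μ := volume.restrict (Ioc u (u + 1))) (ae_of_all _ fun _ => mem_univ _)
    hlogf.integrableOn_Ioc
    (hf.integrableOn_Ioc.congr_fun (fun x _ => (exp_log (hpos x)).symm) measurableSet_Ioc)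
  simp only [exp_log (hpos _)] at hjensen
  rw [le_log_iff_exp_le (intervalIntegral.intervalIntegral_pos_of_pos
      (hf.intervalIntegrable _ _) hpos (lt_add_one u)),
    intervalIntegral.integral_of_le (le_add_of_nonneg_right zero_le_one),
    intervalIntegral.integral_of_le (le_add_of_nonneg_right zero_le_one)]
  exact hjensen

lemma log_stdCDF_window_ge (u : ℝ) :
    -(1 / 2) * log (2 * π) - (u ^ 2 + u + 1 / 3) / 2 ≤ log (stdCDF (u + 1) - stdCDF u) := by
  rw [stdCDF_sub_stdCDF (le_add_of_nonneg_right zero_le_one),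
    ← integral_log_gaussianPDFReal_zero_one]
  exact intervalIntegral_log_le_log_intervalIntegral (continuous_gaussianPDFReal 0 1)
    (fun x => gaussianPDFReal_pos 0 1 x one_ne_zero) u

lemma log_stdCDF_sub_mono {a b c d : ℝ} (hca : c ≤ a) (hab : a < b) (hbd : b ≤ d) :
    log (stdCDF b - stdCDF a) ≤ log (stdCDF d - stdCDF c) :=
  log_le_log (sub_pos.2 (stdCDF_strictMono hab)) <|
    sub_le_sub (stdCDF_strictMono.monotone hbd) (stdCDF_strictMono.monotone hca)

lemma log_stdCDF_sub_nonpos {a b : ℝ} (hab : a ≤ b) : log (stdCDF b - stdCDF a) ≤ 0 :=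
  log_nonpos (sub_nonneg.2 (stdCDF_strictMono.monotone hab))
    (by linarith [stdCDF_le_one b, stdCDF_nonneg a])

section GaussianMoments

variable (μ : ℝ) (v : ℝ≥0)

lemma integrable_id_gaussianReal : Integrable (fun z : ℝ => z) (gaussianReal μ v) :=
  (memLp_id_gaussianReal 1).integrable le_rfl

lemma integrable_sq_gaussianReal : Integrable (fun z : ℝ => z ^ 2) (gaussianReal μ v) :=
  (memLp_id_gaussianReal 2).integrable_sq

lemma integral_sq_gaussianReal : ∫ z, z ^ 2 ∂(gaussianReal μ v) = μ ^ 2 + v := by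
  have h := variance_eq_sub (memLp_id_gaussianReal (μ := μ) (v := v) 2)
  rw [variance_id_gaussianReal] at h
  simp only [Pi.pow_apply, id_eq, integral_id_gaussianReal] at h
  linarith

lemma integrable_quadratic_gaussianReal (p q r : ℝ) :
    Integrable (fun z => p + q * z + r * z ^ 2) (gaussianReal μ v) :=
  ((integrable_const p).add ((integrable_id_gaussianReal μ v).const_mul q)).add
    ((integrable_sq_gaussianReal μ v).const_mul r)

lemma integral_quadratic_gaussianReal (p q r : ℝ) :
    ∫ z, p + q * z + r * z ^ 2 ∂(gaussianReal μ v) = p + q * μ + r * (μ ^ 2 + v) := by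
  rw [integral_add (f := fun z => p + q * z)
      ((integrable_const p).add ((integrable_id_gaussianReal μ v).const_mul q))
      ((integrable_sq_gaussianReal μ v).const_mul r),
    integral_add (integrable_const p) ((integrable_id_gaussianReal μ v).const_mul q),
    integral_const_mul, integral_const_mul, integral_id_gaussianReal, integral_sq_gaussianReal]
  simp

end GaussianMoments

lemma integral_mono_of_nonpos {α : Type*} [MeasurableSpace α] {μ : Measure α} {f g : α → ℝ}
    (hf : f ≤ᵐ[μ] 0) (hgi : Integrable g μ) (hgf : g ≤ᵐ[μ] f) : ∫ x, g x ∂μ ≤ ∫ x, f x ∂μ := by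
  have h := integral_mono_of_nonneg (f := fun x => -f x) (g := fun x => -g x)
    (by filter_upwards [hf] with x hx using neg_nonneg.2 hx) hgi.neg
    (by filter_upwards [hgf] with x hx using neg_le_neg hx)
  rwa [integral_neg, integral_neg, neg_le_neg_iff] at h

lemma integral_log_stdCDF_sub_ge {A B c : ℝ} (hB : B ≤ c) (hA : c + 1 ≤ A) :
    -(1 / 2) * log (2 * π) - (c ^ 2 + c) / 2 - 2 / 3 ≤
      ∫ z, log (stdCDF (A - z) - stdCDF (B - z)) ∂(gaussianReal 0 1) := by
  set p := -(1 / 2) * log (2 * π) - (c ^ 2 + c + 1 / 3) / 2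
  have hwindow (z : ℝ) :
      p + (c + 1 / 2) * z + (-1 / 2) * z ^ 2 ≤ log (stdCDF (A - z) - stdCDF (B - z)) :=
    calc p + (c + 1 / 2) * z + (-1 / 2) * z ^ 2
        = -(1 / 2) * log (2 * π) - ((c - z) ^ 2 + (c - z) + 1 / 3) / 2 := by ring
      _ ≤ log (stdCDF (c - z + 1) - stdCDF (c - z)) := log_stdCDF_window_ge (c - z)
      _ ≤ log (stdCDF (A - z) - stdCDF (B - z)) :=
        log_stdCDF_sub_mono (by linarith) (by linarith) (by linarith)
  calc -(1 / 2) * log (2 * π) - (c ^ 2 + c) / 2 - 2 / 3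
      = ∫ z, p + (c + 1 / 2) * z + (-1 / 2) * z ^ 2 ∂(gaussianReal 0 1) := by
        rw [integral_quadratic_gaussianReal]; push_cast; ring
    _ ≤ ∫ z, log (stdCDF (A - z) - stdCDF (B - z)) ∂(gaussianReal 0 1) :=
      integral_mono_of_nonpos (ae_of_all _ fun z => log_stdCDF_sub_nonpos (by linarith))
        (integrable_quadratic_gaussianReal 0 1 _ _ _) (ae_of_all _ hwindow)

/-- Inequality (A.2): uniformly in `v ∈ (0,1]`, `l ≥ 1`, `|θ| ≤ l`,
`E log Φ_{l,v} ≥ log φ(0) - 2/3 = -(1/2) log(2π) - 2/3`, where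
`Φ_{l,v} = Φ(v^{-1/2}(l-θ) - Z) - Φ(v^{-1/2}(-l-θ) - Z)`. -/
theorem gaussian_window_log_expectation_bound (v l θ : ℝ)
    (hv : v ∈ Set.Ioc (0 : ℝ) 1) (hl : 1 ≤ l) (hθ : |θ| ≤ l) :
    -(1 / 2) * Real.log (2 * π) - 2 / 3 ≤
      ∫ z, Real.log (stdCDF ((l - θ) / Real.sqrt v - z)
          - stdCDF ((-l - θ) / Real.sqrt v - z)) ∂(gmeas 0 1) := by
  set A := (l - θ) / Real.sqrt v
  set B := (-l - θ) / Real.sqrt v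
  have hsqrt : 0 < Real.sqrt v := Real.sqrt_pos.2 hv.1
  have hsqrt_le : Real.sqrt v ≤ 1 := Real.sqrt_le_one.2 hv.2
  obtain ⟨hθl, hθu⟩ := abs_le.1 hθ
  have hA : 0 ≤ A := div_nonneg (by linarith) hsqrt.le
  have hB : B ≤ 0 := div_nonpos_of_nonpos_of_nonneg (by linarith) hsqrt.le
  have hwidth : 2 ≤ A - B := by
    rw [← sub_div, le_div_iff₀ hsqrt]
    nlinarith
  set c := max B (-1)
  have hc : c ^ 2 + c ≤ 0 := by nlinarith [le_max_right B (-1), max_le hB (neg_one_lt_zero).le]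
  have hcA : c + 1 ≤ A := le_sub_iff_add_le.1 (max_le (by linarith) (by linarith))
  rw [gmeas, Real.toNNReal_one]
  linarith [integral_log_stdCDF_sub_ge (le_max_left B (-1)) hcA]

end
end

section
/- (The exponent G is minimized at the bracketing grid index.) Fix r > 0, b ∈ (0,1], λ > 0, and define α_j, β_j, μ_j = λα_j as for the discrete sparse prior. For θ ≥ λ write θ = λ(α_l + ω) with l ≥ 1 and ω ∈ [0, α̇_l), so that θ ∈ [μ_l, μ_{l+1}), and define G(μ_j; θ) = μ_j²/2 − μ_j θ + (λ²/2)(β_j + r⁻¹) for j ≥ 1. Then the map j ↦ G(μ_j; θ) on j ≥ 1 is minimized at j = l: for every j with 1 ≤ j < l one has G(μ_j; θ) ≥ G(μ_{j+1}; θ), and for every j ≥ l one has G(μ_{j+1}; θ) ≥ G(μ_j; θ); moreover G(μ_{l+k+1}; θ) − G(μ_{l+k}; θ) ≥ λ² α̇_{l+k}(α_{l+k+1} − α_{l+1}) ≥ 0 for all k ≥ 1. -/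
open MeasureTheory ProbabilityTheory Real Filter Set

noncomputable section

/-- `K = 1 + ⌈2 b^{-3/2}⌉`. -/
def KD (b : ℝ) : ℕ := 1 + ⌈2 * b ^ (-(3 : ℝ) / 2)⌉₊

/-- Spacing sequence `α_j`: `α_j = 1 + b(j-1)` for `1 ≤ j ≤ K`, `α_j = α_K + j - K` beyond. -/
def alphaD (b : ℝ) (j : ℕ) : ℝ :=
  if j ≤ KD b then 1 + b * ((j : ℝ) - 1)
  else 1 + b * ((KD b : ℝ) - 1) + ((j : ℝ) - (KD b : ℝ))

/-- Decay sequence `β_j`: same as `α_j` with `b` replaced by `b²`. -/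
def betaD (b : ℝ) (j : ℕ) : ℝ :=
  if j ≤ KD b then 1 + b ^ 2 * ((j : ℝ) - 1)
  else 1 + b ^ 2 * ((KD b : ℝ) - 1) + ((j : ℝ) - (KD b : ℝ))

/-- Increments `α̇_j = α_{j+1} - α_j`. -/
def alphadot (b : ℝ) (j : ℕ) : ℝ := alphaD b (j + 1) - alphaD b j

/-- Normalizing constant `c(η)` of the discrete sparse prior, determined by
`1/(2c(η)) = (1-η^{b²vK})/(1-η^{b²v}) + η^{b²v(K-1)+v}/(1-η^v)`. -/
def cD (r b η : ℝ) : ℝ :=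
  (2 * ((1 - η ^ (b ^ 2 * vv r * (KD b : ℝ))) / (1 - η ^ (b ^ 2 * vv r))
      + η ^ (b ^ 2 * vv r * ((KD b : ℝ) - 1) + vv r) / (1 - η ^ vv r)))⁻¹

/-- The normalized nonzero part `ν` of the discrete sparse prior `π_D[η; b, r]`:
atoms `±μ_j = ±λ α_j` with weights `c(η) ζ^{β_j - 1}` (`ζ = η^v`), for `j ≥ 1`. -/
def nuD (r b η : ℝ) : Measure ℝ :=
  Measure.sum (fun j : ℕ =>
    ENNReal.ofReal (cD r b η * (η ^ vv r) ^ (betaD b (j + 1) - 1)) •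
      (Measure.dirac (lam r η * alphaD b (j + 1)) +
        Measure.dirac (-(lam r η * alphaD b (j + 1)))))

/-- `G(μ_j; θ) = μ_j²/2 - μ_j θ + (λ²/2)(β_j + r⁻¹)`, `μ_j = λ α_j`. -/
def Gexp (r b lamv θ : ℝ) (j : ℕ) : ℝ :=
  (lamv * alphaD b j) ^ 2 / 2 - lamv * alphaD b j * θ + lamv ^ 2 / 2 * (betaD b j + r⁻¹)


/-- The common shape of `alphaD` and `betaD`: slope `c` up to `K`, slope `1` beyond. -/
theorem ramp_succ_sub (c : ℝ) (K j : ℕ) :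
    ((if j + 1 ≤ K then 1 + c * (((j + 1 : ℕ) : ℝ) - 1)
        else 1 + c * ((K : ℝ) - 1) + (((j + 1 : ℕ) : ℝ) - K))
      - if j ≤ K then 1 + c * ((j : ℝ) - 1) else 1 + c * ((K : ℝ) - 1) + ((j : ℝ) - K))
      = if j < K then c else 1 := by
  rcases lt_trichotomy j K with h | rfl | h
  · simp only [if_pos h, if_pos h.le, if_pos (Nat.succ_le_of_lt h)]; push_cast; ring
  · simp only [lt_irrefl, if_false, le_refl, if_true, Nat.not_succ_le_self]; push_cast; ring
  · simp only [if_neg (Nat.lt_asymm h), if_neg h.not_ge, if_neg (by omega : ¬ j + 1 ≤ K)]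
    push_cast; ring

theorem alphadot_eq (b : ℝ) (j : ℕ) : alphadot b j = if j < KD b then b else 1 :=
  ramp_succ_sub b (KD b) j

theorem betaD_succ_sub (b : ℝ) (j : ℕ) : betaD b (j + 1) - betaD b j = alphadot b j ^ 2 := by
  rw [alphadot_eq, apply_ite (· ^ 2), one_pow]
  exact ramp_succ_sub (b ^ 2) (KD b) j

theorem alphadot_pos {b : ℝ} (hb : 0 < b) (j : ℕ) : 0 < alphadot b j := by
  rw [alphadot_eq]
  split_ifs
  exacts [hb, one_pos]

theorem alphaD_monotone {b : ℝ} (hb : 0 < b) : Monotone (alphaD b) :=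
  monotone_nat_of_le_succ fun j => sub_nonneg.1 (alphadot_pos hb j).le

/-- Completing the square, with `β_{j+1} - β_j = α̇_j²`. -/
theorem Gexp_succ_sub (r b lamv t : ℝ) (j : ℕ) :
    Gexp r b lamv (lamv * t) (j + 1) - Gexp r b lamv (lamv * t) j
      = lamv ^ 2 * alphadot b j * (alphaD b (j + 1) - t) := by
  have hβ : betaD b (j + 1) = betaD b j + alphadot b j ^ 2 := by
    linarith [betaD_succ_sub b j]
  simp only [Gexp, hβ, alphadot]
  ring

theorem Gexp_succ_le {r b lamv t : ℝ} (hb : 0 < b) {j : ℕ} (h : alphaD b (j + 1) ≤ t) :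
    Gexp r b lamv (lamv * t) (j + 1) ≤ Gexp r b lamv (lamv * t) j := by
  have hdiff : lamv ^ 2 * alphadot b j * (alphaD b (j + 1) - t) ≤ 0 :=
    mul_nonpos_of_nonneg_of_nonpos (by positivity [alphadot_pos hb j]) (sub_nonpos.2 h)
  linarith [Gexp_succ_sub r b lamv t j]

theorem Gexp_le_succ {r b lamv t : ℝ} (hb : 0 < b) {j : ℕ} (h : t ≤ alphaD b (j + 1)) :
    Gexp r b lamv (lamv * t) j ≤ Gexp r b lamv (lamv * t) (j + 1) := by
  have hdiff : 0 ≤ lamv ^ 2 * alphadot b j * (alphaD b (j + 1) - t) :=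
    mul_nonneg (mul_nonneg (sq_nonneg _) (alphadot_pos hb j).le) (sub_nonneg.2 h)
  linarith [Gexp_succ_sub r b lamv t j]

theorem Gexp_minimized_at_bracketing_index_general (r b lamv : ℝ)
    (hb : b ∈ Set.Ioc (0 : ℝ) 1)
    (l : ℕ) (ω : ℝ) (hω0 : 0 ≤ ω) (hω : ω < alphadot b l) :
    (∀ j : ℕ, 1 ≤ j → j < l →
        Gexp r b lamv (lamv * (alphaD b l + ω)) (j + 1)
          ≤ Gexp r b lamv (lamv * (alphaD b l + ω)) j)
    ∧ (∀ j : ℕ, l ≤ j →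
        Gexp r b lamv (lamv * (alphaD b l + ω)) j
          ≤ Gexp r b lamv (lamv * (alphaD b l + ω)) (j + 1))
    ∧ (∀ k : ℕ, 1 ≤ k →
        lamv ^ 2 * alphadot b (l + k) * (alphaD b (l + k + 1) - alphaD b (l + 1))
            ≤ Gexp r b lamv (lamv * (alphaD b l + ω)) (l + k + 1)
              - Gexp r b lamv (lamv * (alphaD b l + ω)) (l + k)
          ∧ 0 ≤ lamv ^ 2 * alphadot b (l + k) * (alphaD b (l + k + 1) - alphaD b (l + 1))) := by
  have hmono := alphaD_monotone hb.1
  have hθ : alphaD b l + ω < alphaD b (l + 1) := by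
    rw [alphadot] at hω
    linarith
  refine ⟨fun j _ hj => Gexp_succ_le hb.1 ((hmono hj).trans (le_add_of_nonneg_right hω0)),
    fun j hj => Gexp_le_succ hb.1 (hθ.le.trans (hmono (by omega))), fun k _ => ?_⟩
  have hdot := (alphadot_pos hb.1 (l + k)).le
  have hgap : alphaD b (l + 1) ≤ alphaD b (l + k + 1) := hmono (by omega)
  rw [Gexp_succ_sub]
  exact ⟨by gcongr, mul_nonneg (mul_nonneg (sq_nonneg _) hdot) (sub_nonneg.2 hgap)⟩

/-- The exponent `j ↦ G(μ_j; θ)` is minimized at the bracketing index `l`, where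
`θ = λ(α_l + ω)` with `l ≥ 1`, `ω ∈ [0, α̇_l)`; moreover the increments beyond `l+1`
satisfy `G(μ_{l+k+1};θ) - G(μ_{l+k};θ) ≥ λ² α̇_{l+k}(α_{l+k+1} - α_{l+1}) ≥ 0`. -/
theorem Gexp_minimized_at_bracketing_index (r b lamv : ℝ) (hr : 0 < r)
    (hb : b ∈ Set.Ioc (0 : ℝ) 1) (hlam : 0 < lamv)
    (l : ℕ) (hl : 1 ≤ l) (ω : ℝ) (hω0 : 0 ≤ ω) (hω : ω < alphadot b l) :
    (∀ j : ℕ, 1 ≤ j → j < l →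
        Gexp r b lamv (lamv * (alphaD b l + ω)) (j + 1)
          ≤ Gexp r b lamv (lamv * (alphaD b l + ω)) j)
    ∧ (∀ j : ℕ, l ≤ j →
        Gexp r b lamv (lamv * (alphaD b l + ω)) j
          ≤ Gexp r b lamv (lamv * (alphaD b l + ω)) (j + 1))
    ∧ (∀ k : ℕ, 1 ≤ k →
        lamv ^ 2 * alphadot b (l + k) * (alphaD b (l + k + 1) - alphaD b (l + 1))
            ≤ Gexp r b lamv (lamv * (alphaD b l + ω)) (l + k + 1)
              - Gexp r b lamv (lamv * (alphaD b l + ω)) (l + k)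
          ∧ 0 ≤ lamv ^ 2 * alphadot b (l + k) * (alphaD b (l + k + 1) - alphaD b (l + 1))) :=
  Gexp_minimized_at_bracketing_index_general r b lamv hb l ω hω0 hω

end
end
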